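/- arXiv:math/0310440 — 4 statements merged into one kernel-verified Lean document; each statement's English description precedes it below -/
import Mathlib

section
/- For all z, w, ζ in the unit disk 𝔻, the pseudo-hyperbolic distance satisfies d(z, w) ≤ (d(z, ζ) + d(ζ, w)) / (1 + d(z, ζ)·d(ζ, w)). -/
open Complex Metric

/-- pseudo-hyperbolic distance on the unit disk -/
noncomputable def pd (z w : ℂ) : ℝ := ‖(z - w) / (1 - (starRingEnd ℂ) w * z)‖

private lemma normSq_diff (u v : ℂ) :
    (‖1 - (starRingEnd ℂ) v * u‖)^2 - (‖u - v‖)^2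
      = (1 - Complex.normSq u) * (1 - Complex.normSq v) := by
  simp only [Complex.sq_norm, Complex.normSq_apply, Complex.sub_re, Complex.sub_im,
    Complex.mul_re, Complex.mul_im, Complex.one_re, Complex.one_im,
    RingHom.coe_coe, Complex.conj_re, Complex.conj_im]
  ring

private lemma real_aux (P Q R p q r Az Aw Aζ : ℝ) (hP : 0 < P) (hQ : 0 < Q) (hR : 0 < R)
    (hp : 0 ≤ p) (hq : 0 ≤ q) (hr : 0 ≤ r) (hAz : 0 < Az) (hAw : 0 < Aw) (hAζ : 0 < Aζ)
    (e1 : R^2 - r^2 = Az*Aw) (e2 : P^2 - p^2 = Az*Aζ) (e3 : Q^2 - q^2 = Aζ*Aw)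
    (key : Aζ * R ≤ P*Q + p*q) :
    r / R ≤ (p/P + q/Q) / (1 + p/P*(q/Q)) := by
  have hr2 : r^2 = R^2 - Az*Aw := by linarith
  have sq1 : (Aζ*R)^2 ≤ (P*Q+p*q)^2 :=
    pow_le_pow_left₀ (by positivity) key 2
  have h := mul_le_mul_of_nonneg_left sq1 (mul_pos hAz hAw).le
  have step0 : r^2*(P*Q+p*q)^2 ≤ R^2*(p*Q+q*P)^2 := by
    calc r^2*(P*Q+p*q)^2 = (R^2 - Az*Aw)*(P*Q+p*q)^2 := by rw [hr2]
    _ ≤ R^2*(P*Q+p*q)^2 - Az*Aw*((Aζ*R)^2) := by nlinarith [h]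
    _ = R^2*((P*Q+p*q)^2 - (Az*Aζ)*(Aζ*Aw)) := by ring
    _ = R^2*((P*Q+p*q)^2 - (P^2-p^2)*(Q^2-q^2)) := by rw [e2, e3]
    _ = R^2*(p*Q+q*P)^2 := by ring
  have step1 : r*(P*Q+p*q) ≤ R*(p*Q+q*P) := by
    have h1 : (r*(P*Q+p*q))^2 ≤ (R*(p*Q+q*P))^2 := by nlinarith [step0]
    have h2 : 0 ≤ r*(P*Q+p*q) := by positivity
    have h3 : 0 ≤ R*(p*Q+q*P) := by positivity
    nlinarith [h1, h2, h3]
  have hden : (0:ℝ) < 1 + p/P*(q/Q) := by positivity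
  rw [div_le_div_iff₀ hR hden]
  have hPQ : (0:ℝ) < P*Q := mul_pos hP hQ
  calc r * (1 + p/P*(q/Q)) = r*(P*Q+p*q)/(P*Q) := by field_simp
  _ ≤ R*(p*Q+q*P)/(P*Q) := by gcongr
  _ = (p/P + q/Q)*R := by field_simp

theorem pseudohyperbolic_triangle (z w ζ : ℂ)
    (hz : z ∈ ball (0:ℂ) 1) (hw : w ∈ ball (0:ℂ) 1) (hζ : ζ ∈ ball (0:ℂ) 1) :
    pd z w ≤ (pd z ζ + pd ζ w) / (1 + pd z ζ * pd ζ w) := by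
  simp only [mem_ball, Complex.dist_eq, sub_zero] at hz hw hζ
  have hne : ∀ u v : ℂ, ‖u‖ < 1 → ‖v‖ < 1 →
      (1:ℂ) - (starRingEnd ℂ) v * u ≠ 0 := by
    intro u v hu hv h
    have h1 : (starRingEnd ℂ) v * u = 1 := by
      have := sub_eq_zero.mp h; linear_combination -this
    have h2 : ‖(starRingEnd ℂ) v * u‖ < 1 := by
      rw [norm_mul, Complex.norm_conj]
      have := norm_nonneg u
      have := norm_nonneg v
      nlinarith
    rw [h1, norm_one] at h2
    exact lt_irrefl 1 h2
  have h1 := hne z ζ hz hζ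
  have h2 := hne ζ w hζ hw
  have h3 := hne z w hz hw
  have hP : 0 < ‖1 - (starRingEnd ℂ) ζ * z‖ := norm_pos_iff.mpr h1
  have hQ : 0 < ‖1 - (starRingEnd ℂ) w * ζ‖ := norm_pos_iff.mpr h2
  have hR : 0 < ‖1 - (starRingEnd ℂ) w * z‖ := norm_pos_iff.mpr h3
  have hAz : 0 < 1 - Complex.normSq z := by
    have : Complex.normSq z = (‖z‖)^2 := (Complex.sq_norm z).symm
    nlinarith [norm_nonneg z]
  have hAw : 0 < 1 - Complex.normSq w := by
    have : Complex.normSq w = (‖w‖)^2 := (Complex.sq_norm w).symm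
    nlinarith [norm_nonneg w]
  have hAζ : 0 < 1 - Complex.normSq ζ := by
    have : Complex.normSq ζ = (‖ζ‖)^2 := (Complex.sq_norm ζ).symm
    nlinarith [norm_nonneg ζ]
  -- key triangle inequality
  have hid : ((1:ℂ) - (starRingEnd ℂ) ζ * ζ) * (1 - (starRingEnd ℂ) w * z)
      = ((1 - (starRingEnd ℂ) ζ * z) * (1 - (starRingEnd ℂ) w * ζ))
        - ((ζ - z) * ((starRingEnd ℂ) ζ - (starRingEnd ℂ) w)) := by ring
  have habs1 : ‖(1:ℂ) - (starRingEnd ℂ) ζ * ζ‖ = 1 - Complex.normSq ζ := by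
    have : (1:ℂ) - (starRingEnd ℂ) ζ * ζ = ((1 - Complex.normSq ζ : ℝ) : ℂ) := by
      push_cast
      rw [mul_comm, Complex.mul_conj]
    rw [this, Complex.norm_real, Real.norm_eq_abs, abs_of_pos hAζ]
  have key : (1 - Complex.normSq ζ) * ‖1 - (starRingEnd ℂ) w * z‖
      ≤ ‖1 - (starRingEnd ℂ) ζ * z‖ * ‖1 - (starRingEnd ℂ) w * ζ‖
        + ‖z - ζ‖ * ‖ζ - w‖ := by
    have h := congrArg (‖·‖) hid
    rw [norm_mul, habs1] at h
    rw [h]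
    calc ‖(1 - (starRingEnd ℂ) ζ * z) * (1 - (starRingEnd ℂ) w * ζ)
          - (ζ - z) * ((starRingEnd ℂ) ζ - (starRingEnd ℂ) w)‖
        ≤ ‖(1 - (starRingEnd ℂ) ζ * z) * (1 - (starRingEnd ℂ) w * ζ)‖
          + ‖(ζ - z) * ((starRingEnd ℂ) ζ - (starRingEnd ℂ) w)‖ :=
          norm_sub_le _ _
      _ = ‖1 - (starRingEnd ℂ) ζ * z‖ * ‖1 - (starRingEnd ℂ) w * ζ‖
          + ‖z - ζ‖ * ‖ζ - w‖ := by
          rw [norm_mul, norm_mul]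
          congr 1
          rw [norm_sub_rev z ζ]
          congr 1
          rw [← map_sub, Complex.norm_conj]
  have e1 := normSq_diff z w
  have e2 := normSq_diff z ζ
  have e3 := normSq_diff ζ w
  have hpd1 : pd z w = ‖z - w‖ / ‖1 - (starRingEnd ℂ) w * z‖ := by
    rw [pd, norm_div]
  have hpd2 : pd z ζ = ‖z - ζ‖ / ‖1 - (starRingEnd ℂ) ζ * z‖ := by
    rw [pd, norm_div]
  have hpd3 : pd ζ w = ‖ζ - w‖ / ‖1 - (starRingEnd ℂ) w * ζ‖ := by
    rw [pd, norm_div]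
  rw [hpd1, hpd2, hpd3]
  exact real_aux _ _ _ _ _ _ _ _ _ hP hQ hR (norm_nonneg _) (norm_nonneg _)
    (norm_nonneg _) hAz hAw hAζ e1 e2 e3 key
end

section
/- (Julia's Lemma, simplified version) Let φ be an analytic self-map of 𝔻, ζ ∈ ∂𝔻, and pₖ ∈ 𝔻 a sequence with pₖ → ζ and φ(pₖ) → ζ, such that (1 − |φ(pₖ)|)/(1 − |pₖ|) → d > 0. Then for every t > 0, φ(H(t)) ⊆ H(dt), where H(t) = {z ∈ 𝔻 : (1 − |z|²)/|ζ − z|² > 1/t} is the horodisk of parameter t at ζ. -/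
/-!
By the Schwarz–Pick lemma, `(1 - |w|²)(1 - |z|²) / |1 - w̄z|² = 1 - |(w - z) / (1 - w̄z)|²` can only
increase under `φ`. Taking `w = pₖ`, dividing by `1 - |pₖ|²` and letting `k → ∞` gives Julia's
inequality `(1 - |z|²) / |ζ - z|² ≤ d (1 - |φ z|²) / |ζ - φ z|²`: on the unit circle
`|1 - ζ̄z| = |ζ - z|`, and `(1 - |φ pₖ|²) / (1 - |pₖ|²)` tends to `d` as well, because
`(1 + |φ pₖ|) / (1 + |pₖ|) → 1`. The horodisk inclusion is a rearrangement of this inequality.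
-/

open Complex Metric Filter

open ComplexConjugate Topology

namespace Complex

theorem sq_norm_one_sub_conj_mul_sub_sq_norm_sub (a z : ℂ) :
    ‖1 - conj a * z‖ ^ 2 - ‖a - z‖ ^ 2 = (1 - ‖a‖ ^ 2) * (1 - ‖z‖ ^ 2) := by
  simp only [Complex.sq_norm, normSq_apply, sub_re, sub_im, mul_re, mul_im, conj_re, conj_im,
    one_re, one_im]
  ring

theorem one_sub_conj_mul_ne_zero {a z : ℂ} (ha : ‖a‖ ≤ 1) (hz : ‖z‖ < 1) :
    1 - conj a * z ≠ 0 := by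
  rw [sub_ne_zero]
  intro h
  have : ‖conj a * z‖ < 1 := by
    rw [norm_mul, norm_conj]
    nlinarith [norm_nonneg a, norm_nonneg z]
  simp [← h] at this

theorem norm_one_sub_conj_mul_of_norm_eq_one {ζ : ℂ} (hζ : ‖ζ‖ = 1) (w : ℂ) :
    ‖1 - conj ζ * w‖ = ‖ζ - w‖ := by
  have hζζ : conj ζ * ζ = 1 := by
    rw [← normSq_eq_conj_mul_self, ← Complex.sq_norm, hζ]; norm_num
  rw [show 1 - conj ζ * w = conj ζ * (ζ - w) by linear_combination -hζζ, norm_mul, norm_conj,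
    hζ, one_mul]

-- The automorphism of the unit disc exchanging `0` and `a`.
noncomputable def diskInvolution (a z : ℂ) : ℂ := (a - z) / (1 - conj a * z)

theorem one_sub_sq_norm_diskInvolution {a z : ℂ} (ha : ‖a‖ < 1) (hz : ‖z‖ < 1) :
    1 - ‖diskInvolution a z‖ ^ 2 = (1 - ‖a‖ ^ 2) * (1 - ‖z‖ ^ 2) / ‖1 - conj a * z‖ ^ 2 := by
  have hden : ‖1 - conj a * z‖ ^ 2 ≠ 0 := by
    simpa using one_sub_conj_mul_ne_zero ha.le hz
  rw [diskInvolution, norm_div, div_pow, eq_div_iff hden, sub_mul, div_mul_cancel₀ _ hden,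
    ← sq_norm_one_sub_conj_mul_sub_sq_norm_sub, one_mul]

theorem norm_diskInvolution_lt_one {a z : ℂ} (ha : ‖a‖ < 1) (hz : ‖z‖ < 1) :
    ‖diskInvolution a z‖ < 1 := by
  have hpos : 0 < 1 - ‖diskInvolution a z‖ ^ 2 := by
    rw [one_sub_sq_norm_diskInvolution ha hz]
    have hden := one_sub_conj_mul_ne_zero ha.le hz
    have ha2 : 0 < 1 - ‖a‖ ^ 2 := by nlinarith [norm_nonneg a]
    have hz2 : 0 < 1 - ‖z‖ ^ 2 := by nlinarith [norm_nonneg z]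
    positivity
  nlinarith [norm_nonneg (diskInvolution a z)]

theorem mapsTo_diskInvolution {a : ℂ} (ha : ‖a‖ < 1) :
    Set.MapsTo (diskInvolution a) (ball 0 1) (ball 0 1) := fun z hz => by
  rw [mem_ball_zero_iff] at hz ⊢
  exact norm_diskInvolution_lt_one ha hz

theorem diskInvolution_diskInvolution {a z : ℂ} (ha : ‖a‖ < 1) (hz : ‖z‖ < 1) :
    diskInvolution a (diskInvolution a z) = z := by
  have hz' := one_sub_conj_mul_ne_zero ha.le hz
  have ha' := one_sub_conj_mul_ne_zero ha.le ha
  have hnum : a - diskInvolution a z = z * (1 - conj a * a) / (1 - conj a * z) := by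
    rw [diskInvolution, eq_div_iff hz', sub_mul, div_mul_cancel₀ _ hz']; ring
  have hden : 1 - conj a * diskInvolution a z = (1 - conj a * a) / (1 - conj a * z) := by
    rw [diskInvolution, eq_div_iff hz', sub_mul, mul_assoc, div_mul_cancel₀ _ hz']; ring
  rw [diskInvolution, hnum, hden, div_div_div_cancel_right₀ hz', mul_div_cancel_right₀ _ ha']

theorem differentiableOn_diskInvolution {a : ℂ} (ha : ‖a‖ < 1) :
    DifferentiableOn ℂ (diskInvolution a) (ball 0 1) := by
  refine DifferentiableOn.div (by fun_prop) (by fun_prop) fun z hz => ?_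
  exact one_sub_conj_mul_ne_zero ha.le (mem_ball_zero_iff.1 hz)

section SchwarzPick

variable {f : ℂ → ℂ} (hd : DifferentiableOn ℂ f (ball 0 1))
  (hm : Set.MapsTo f (ball 0 1) (ball 0 1))
include hd hm

theorem norm_diskInvolution_map_le {z w : ℂ} (hz : z ∈ ball (0 : ℂ) 1)
    (hw : w ∈ ball (0 : ℂ) 1) :
    ‖diskInvolution (f w) (f z)‖ ≤ ‖diskInvolution w z‖ := by
  have hw' := mem_ball_zero_iff.1 hw
  have hfw := mem_ball_zero_iff.1 (hm hw)
  set g := diskInvolution (f w) ∘ f ∘ diskInvolution w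
  have hgd : DifferentiableOn ℂ g (ball 0 1) :=
    (differentiableOn_diskInvolution hfw).comp
      (hd.comp (differentiableOn_diskInvolution hw') (mapsTo_diskInvolution hw'))
      (hm.comp (mapsTo_diskInvolution hw'))
  have hgm : Set.MapsTo g (ball 0 1) (ball 0 1) :=
    (mapsTo_diskInvolution hfw).comp (hm.comp (mapsTo_diskInvolution hw'))
  have hg0 : g 0 = 0 := by simp [g, diskInvolution]
  have hschwarz := norm_le_norm_of_mapsTo_ball hgd (hgm.mono_right ball_subset_closedBall) hg0
    (norm_diskInvolution_lt_one hw' (mem_ball_zero_iff.1 hz))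
  simpa only [g, Function.comp_apply,
    diskInvolution_diskInvolution hw' (mem_ball_zero_iff.1 hz)] using hschwarz

theorem one_sub_sq_norm_mul_div_le_map {z w : ℂ} (hz : z ∈ ball (0 : ℂ) 1)
    (hw : w ∈ ball (0 : ℂ) 1) :
    (1 - ‖w‖ ^ 2) * (1 - ‖z‖ ^ 2) / ‖1 - conj w * z‖ ^ 2 ≤
      (1 - ‖f w‖ ^ 2) * (1 - ‖f z‖ ^ 2) / ‖1 - conj (f w) * f z‖ ^ 2 := by
  rw [← one_sub_sq_norm_diskInvolution (mem_ball_zero_iff.1 hw) (mem_ball_zero_iff.1 hz),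
    ← one_sub_sq_norm_diskInvolution (mem_ball_zero_iff.1 (hm hw)) (mem_ball_zero_iff.1 (hm hz))]
  gcongr
  exact norm_diskInvolution_map_le hd hm hz hw

end SchwarzPick

end Complex

theorem Filter.Tendsto.one_sub_sq_div_one_sub_sq {ι : Type*} {l : Filter ι} {x y : ι → ℝ}
    {d : ℝ} (h : Tendsto (fun i => (1 - y i) / (1 - x i)) l (𝓝 d))
    (hx : Tendsto x l (𝓝 1)) (hy : Tendsto y l (𝓝 1)) :
    Tendsto (fun i => (1 - y i ^ 2) / (1 - x i ^ 2)) l (𝓝 d) := by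
  have hplus : Tendsto (fun i => (1 + y i) / (1 + x i)) l (𝓝 1) := by
    have := ((tendsto_const_nhds (x := (1 : ℝ))).add hy).div
      ((tendsto_const_nhds (x := (1 : ℝ))).add hx) (by norm_num)
    rwa [div_self (by norm_num)] at this
  refine (mul_one d ▸ h.mul hplus).congr fun i => ?_
  rw [div_mul_div_comm]
  congr 1 <;> ring

theorem julia_inequality {φ : ℂ → ℂ} (hd : DifferentiableOn ℂ φ (ball 0 1))
    (hm : Set.MapsTo φ (ball 0 1) (ball 0 1)) {ζ : ℂ} (hζ : ‖ζ‖ = 1) {p : ℕ → ℂ}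
    (hp : ∀ k, p k ∈ ball (0 : ℂ) 1) (hpζ : Tendsto p atTop (𝓝 ζ))
    (hφpζ : Tendsto (fun k => φ (p k)) atTop (𝓝 ζ)) {d : ℝ}
    (hratio : Tendsto (fun k => (1 - ‖φ (p k)‖) / (1 - ‖p k‖)) atTop (𝓝 d))
    {z : ℂ} (hz : z ∈ ball (0 : ℂ) 1) :
    (1 - ‖z‖ ^ 2) / ‖ζ - z‖ ^ 2 ≤ d * ((1 - ‖φ z‖ ^ 2) / ‖ζ - φ z‖ ^ 2) := by
  have hsq_ratio := hratio.one_sub_sq_div_one_sub_sq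
    (by simpa [hζ] using hpζ.norm) (by simpa [hζ] using hφpζ.norm)
  have hlim {w : ℂ} (hw : w ∈ ball (0 : ℂ) 1) {q : ℕ → ℂ} (hq : Tendsto q atTop (𝓝 ζ)) :
      Tendsto (fun k => (1 - ‖w‖ ^ 2) / ‖1 - conj (q k) * w‖ ^ 2) atTop
        (𝓝 ((1 - ‖w‖ ^ 2) / ‖ζ - w‖ ^ 2)) := by
    have hcont : Continuous fun v : ℂ => ‖1 - conj v * w‖ ^ 2 := by fun_prop
    have hden := (hcont.tendsto ζ).comp hq
    rw [Function.comp_def, norm_one_sub_conj_mul_of_norm_eq_one hζ] at hden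
    refine tendsto_const_nhds.div hden (pow_ne_zero 2 (norm_ne_zero_iff.2 (sub_ne_zero.2 ?_)))
    rintro rfl
    simp [hζ] at hw
  have hSP (k : ℕ) : (1 - ‖z‖ ^ 2) / ‖1 - conj (p k) * z‖ ^ 2 ≤
      (1 - ‖φ (p k)‖ ^ 2) / (1 - ‖p k‖ ^ 2) *
        ((1 - ‖φ z‖ ^ 2) / ‖1 - conj (φ (p k)) * φ z‖ ^ 2) := by
    have hpk : 0 < 1 - ‖p k‖ ^ 2 := by
      have := mem_ball_zero_iff.1 (hp k)
      nlinarith [norm_nonneg (p k)]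
    rw [div_mul_eq_mul_div, le_div_iff₀ hpk]
    calc (1 - ‖z‖ ^ 2) / ‖1 - conj (p k) * z‖ ^ 2 * (1 - ‖p k‖ ^ 2)
        = (1 - ‖p k‖ ^ 2) * (1 - ‖z‖ ^ 2) / ‖1 - conj (p k) * z‖ ^ 2 := by ring
      _ ≤ (1 - ‖φ (p k)‖ ^ 2) * (1 - ‖φ z‖ ^ 2) / ‖1 - conj (φ (p k)) * φ z‖ ^ 2 :=
        one_sub_sq_norm_mul_div_le_map hd hm hz (hp k)
      _ = _ := by ring
  exact le_of_tendsto_of_tendsto' (hlim hz hpζ) (hsq_ratio.mul (hlim (hm hz) hφpζ)) hSP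

theorem julia_lemma (φ : ℂ → ℂ)
    (hd : DifferentiableOn ℂ φ (ball 0 1))
    (hm : Set.MapsTo φ (ball 0 1) (ball 0 1))
    (ζ : ℂ) (hζ : ‖ζ‖ = 1)
    (p : ℕ → ℂ) (hp : ∀ k, p k ∈ ball (0:ℂ) 1)
    (hpζ : Tendsto p atTop (nhds ζ))
    (hφpζ : Tendsto (fun k => φ (p k)) atTop (nhds ζ))
    (d : ℝ) (hdpos : 0 < d)
    (hratio : Tendsto (fun k => (1 - ‖φ (p k)‖) / (1 - ‖p k‖))
      atTop (nhds d)) :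
    ∀ t : ℝ, 0 < t → ∀ z ∈ ball (0:ℂ) 1,
      1 / t < (1 - ‖z‖ ^ 2) / ‖ζ - z‖ ^ 2 →
      1 / (d * t) < (1 - ‖φ z‖ ^ 2) / ‖ζ - φ z‖ ^ 2 := by
  intro t _ z hz hzH
  have hjulia := julia_inequality hd hm hζ hp hpζ hφpζ hratio hz
  calc 1 / (d * t) = 1 / t / d := by rw [mul_comm, div_div]
    _ < (1 - ‖z‖ ^ 2) / ‖ζ - z‖ ^ 2 / d := div_lt_div_of_pos_right hzH hdpos
    _ ≤ (1 - ‖φ z‖ ^ 2) / ‖ζ - φ z‖ ^ 2 := by rwa [div_le_iff₀' hdpos]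
end

section
/- Let Φ be an analytic self-map of the upper half-plane ℍ = {Im z > 0} and let A = inf_{z ∈ ℍ} Im Φ(z)/Im z. Then Φ(z)/z → A as z → ∞ non-tangentially, i.e., for every δ > 0, Φ(z)/z → A as |z| → ∞ within the sector {|Arg z − π/2| < π/2 − δ}. -/
open Complex Filter Real

set_option maxHeartbeats 1000000

/-- If `a` and `z` are in the upper half-plane then `z` is strictly closer to `a`
than to `conj a`. -/
lemma jc_abs_lt (z a : ℂ) (hz : 0 < z.im) (ha : 0 < a.im) :
    ‖z - a‖ < ‖z - (starRingEnd ℂ) a‖ := by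
  rw [Complex.norm_def, Complex.norm_def]
  apply Real.sqrt_lt_sqrt (Complex.normSq_nonneg _)
  simp only [Complex.normSq_apply, Complex.sub_re, Complex.sub_im, Complex.conj_re,
    Complex.conj_im]
  nlinarith [mul_pos hz ha]

lemma jc_denom_pos (z a : ℂ) (hz : 0 < z.im) (ha : 0 < a.im) :
    0 < ‖z - (starRingEnd ℂ) a‖ :=
  lt_of_le_of_lt (norm_nonneg _) (jc_abs_lt z a hz ha)

/-- Schwarz–Pick inequality for holomorphic self-maps of the upper half-plane. -/
lemma jc_schwarz_pick (ψ : ℂ → ℂ) (hd : DifferentiableOn ℂ ψ {z : ℂ | 0 < z.im})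
    (hm : ∀ z : ℂ, 0 < z.im → 0 < (ψ z).im)
    (z w : ℂ) (hz : 0 < z.im) (hw : 0 < w.im) :
    ‖ψ z - ψ w‖ * ‖z - (starRingEnd ℂ) w‖ ≤
      ‖ψ z - (starRingEnd ℂ) (ψ w)‖ * ‖z - w‖ := by
  set a := ψ w with ha_def
  have haim : 0 < a.im := hm w hw
  set S : ℂ → ℂ := fun u => (w - u * (starRingEnd ℂ) w) / (1 - u) with hS_def
  set T : ℂ → ℂ := fun ζ => (ζ - a) / (ζ - (starRingEnd ℂ) a) with hT_def
  have hball : ∀ u : ℂ, u ∈ Metric.ball (0 : ℂ) 1 → ‖u‖ < 1 := by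
    intro u hu; rwa [Metric.mem_ball, dist_zero_right] at hu
  have hden : ∀ u : ℂ, ‖u‖ < 1 → (1 : ℂ) - u ≠ 0 := by
    intro u hu h
    have : u = 1 := by linear_combination -h
    rw [this] at hu; simp at hu
  -- S maps the unit ball into the upper half-plane
  have hS_im : ∀ u : ℂ, ‖u‖ < 1 → 0 < (S u).im := by
    intro u hu
    have h1 : (1 : ℂ) - u ≠ 0 := hden u hu
    have hns : 0 < Complex.normSq (1 - u) := Complex.normSq_pos.mpr h1
    have hu2 : u.re * u.re + u.im * u.im < 1 := by
      have h := Complex.sq_norm u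
      rw [Complex.normSq_apply] at h
      nlinarith [norm_nonneg u, hu]
    simp only [hS_def, Complex.div_im]
    rw [div_sub_div_same]
    apply div_pos _ hns
    simp only [Complex.sub_re, Complex.sub_im, Complex.mul_re, Complex.mul_im,
      Complex.conj_re, Complex.conj_im, Complex.one_re, Complex.one_im]
    nlinarith [hw, hu2]
  have hS_diff : DifferentiableOn ℂ S (Metric.ball 0 1) := by
    apply DifferentiableOn.div
    · exact ((differentiable_const w).sub
        (differentiable_id.mul_const _)).differentiableOn
    · exact ((differentiable_const (1:ℂ)).sub differentiable_id).differentiableOn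
    · intro u hu; exact hden u (hball u hu)
  have hT_diff : DifferentiableOn ℂ T {z : ℂ | 0 < z.im} := by
    apply DifferentiableOn.div
    · exact (differentiable_id.sub (differentiable_const a)).differentiableOn
    · exact (differentiable_id.sub (differentiable_const _)).differentiableOn
    · intro ζ hζ
      have := jc_denom_pos ζ a hζ haim
      intro h; rw [h] at this; simp at this
  have hT_abs : ∀ ζ : ℂ, 0 < ζ.im → ‖T ζ‖ < 1 := by
    intro ζ hζ
    simp only [hT_def, norm_div]
    rw [div_lt_one (jc_denom_pos ζ a hζ haim)]
    exact jc_abs_lt ζ a hζ haim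
  -- the composite map g of the unit disk
  set g : ℂ → ℂ := T ∘ ψ ∘ S with hg_def
  have hSmaps : Set.MapsTo S (Metric.ball 0 1) {z : ℂ | 0 < z.im} := by
    intro u hu; exact hS_im u (hball u hu)
  have hψmaps : Set.MapsTo ψ {z : ℂ | 0 < z.im} {z : ℂ | 0 < z.im} := by
    intro ζ hζ; exact hm ζ hζ
  have hg_diff : DifferentiableOn ℂ g (Metric.ball 0 1) :=
    (hT_diff.comp (hd.comp hS_diff hSmaps) (hψmaps.comp hSmaps))
  have hg_maps : Set.MapsTo g (Metric.ball 0 1) (Metric.ball 0 1) := by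
    intro u hu
    rw [Metric.mem_ball, dist_zero_right]
    exact hT_abs _ (hm _ (hS_im u (hball u hu)))
  have hS0 : S 0 = w := by simp [hS_def]
  have hg0 : g 0 = 0 := by
    simp only [hg_def, Function.comp_apply, hS0, hT_def, ← ha_def, sub_self, zero_div]
  -- the preimage point
  have hzw : z - (starRingEnd ℂ) w ≠ 0 := by
    have := jc_denom_pos z w hz hw
    intro h; rw [h] at this; simp at this
  set u₀ : ℂ := (z - w) / (z - (starRingEnd ℂ) w) with hu₀_def
  have hu₀ : ‖u₀‖ < 1 := by
    rw [hu₀_def, norm_div, div_lt_one (jc_denom_pos z w hz hw)]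
    exact jc_abs_lt z w hz hw
  have hSu₀ : S u₀ = z := by
    have h1 : (1 : ℂ) - u₀ ≠ 0 := hden u₀ hu₀
    rw [hS_def]
    simp only
    rw [div_eq_iff h1, hu₀_def]
    field_simp
    ring
  have hSch := Complex.norm_le_norm_of_mapsTo_ball hg_diff (hg_maps.mono_right Metric.ball_subset_closedBall) hg0 hu₀
  rw [hg_def] at hSch
  simp only [Function.comp_apply, hSu₀, hT_def] at hSch
  rw [norm_div, hu₀_def, norm_div,
    div_le_div_iff₀ (jc_denom_pos (ψ z) a (hm z hz) haim) (jc_denom_pos z w hz hw)] at hSch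
  linarith [hSch]

/-- Julia–Carathéodory theorem in the half-plane model. -/
theorem julia_caratheodory_halfplane (Φ : ℂ → ℂ)
    (hd : DifferentiableOn ℂ Φ {z : ℂ | 0 < z.im})
    (hm : Set.MapsTo Φ {z : ℂ | 0 < z.im} {z : ℂ | 0 < z.im})
    (A : ℝ)
    (hA : IsGLB {r : ℝ | ∃ z : ℂ, 0 < z.im ∧ r = (Φ z).im / z.im} A) :
    ∀ δ : ℝ, 0 < δ → δ < π / 2 → ∀ ε : ℝ, 0 < ε → ∃ R : ℝ,
      ∀ z : ℂ, 0 < z.im → |Complex.arg z - π / 2| < π / 2 - δ →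
        R < ‖z‖ → ‖Φ z / z - A‖ < ε := by
  intro δ hδ hδ2 ε hε
  have hπ := Real.pi_pos
  have hsin : 0 < Real.sin δ := Real.sin_pos_of_pos_of_lt_pi hδ (by linarith)
  set ψ : ℂ → ℂ := fun z => Φ z - (A : ℂ) * z with hψ_def
  have hψim : ∀ z : ℂ, (ψ z).im = (Φ z).im - A * z.im := by
    intro z
    simp [hψ_def, Complex.sub_im, Complex.mul_im, Complex.ofReal_re, Complex.ofReal_im]
  have hlow : ∀ z : ℂ, 0 < z.im → A * z.im ≤ (Φ z).im := by
    intro z hz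
    have h := hA.1 ⟨z, hz, rfl⟩
    rw [le_div_iff₀ hz] at h
    linarith
  have hψd : DifferentiableOn ℂ ψ {z : ℂ | 0 < z.im} :=
    hd.sub ((differentiable_id.const_mul _).differentiableOn)
  -- key rewriting of the goal quantity
  have hkey : ∀ z : ℂ, z ≠ 0 → Φ z / z - (A : ℂ) = ψ z / z := by
    intro z hz0
    rw [hψ_def]
    field_simp
  by_cases hstrict : ∀ z : ℂ, 0 < z.im → 0 < (ψ z).im
  · -- main case : ψ maps into open upper half-plane
    set η : ℝ := ε * Real.sin δ / 16 with hη_def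
    have hηpos : 0 < η := by positivity
    obtain ⟨r, ⟨w, hw, rfl⟩, -, hrlt⟩ := hA.exists_between (show A < A + η by linarith)
    rw [div_lt_iff₀ hw] at hrlt
    set a : ℂ := ψ w with ha_def
    have haim : 0 < a.im := hstrict w hw
    have haim2 : a.im < η * w.im := by
      rw [ha_def, hψim]; nlinarith
    refine ⟨max (‖w‖) (4 * (‖a‖ + 1) / ε), ?_⟩
    intro z hz harg hR
    have hzabs : 0 < ‖z‖ :=
      lt_of_le_of_lt (le_trans (norm_nonneg w) (le_max_left _ _)) hR
    have hz0 : z ≠ 0 := by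
      intro h; rw [h] at hzabs; simp at hzabs
    have hwz : ‖w‖ ≤ ‖z‖ := le_of_lt (lt_of_le_of_lt (le_max_left _ _) hR)
    have hRa : 4 * (‖a‖ + 1) < ε * ‖z‖ := by
      have h1 : 4 * (‖a‖ + 1) / ε < ‖z‖ :=
        lt_of_le_of_lt (le_max_right _ _) hR
      rw [div_lt_iff₀ hε] at h1
      linarith
    -- sector estimate : sin δ * |z| ≤ z.im
    have hsector : Real.sin δ * ‖z‖ ≤ z.im := by
      have harg2 := abs_lt.mp harg
      have hargl : δ < Complex.arg z := by linarith [harg2.1]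
      have hargu : Complex.arg z < π - δ := by linarith [harg2.2]
      have hsinarg : Real.sin δ ≤ Real.sin (Complex.arg z) := by
        rcases le_or_gt (Complex.arg z) (π / 2) with hle | hgt
        · exact Real.strictMonoOn_sin.monotoneOn ⟨by linarith, by linarith⟩
            ⟨by linarith, hle⟩ (le_of_lt hargl)
        · have : Real.sin (Complex.arg z) = Real.sin (π - Complex.arg z) :=
            (Real.sin_pi_sub _).symm
          rw [this]
          exact Real.strictMonoOn_sin.monotoneOn ⟨by linarith, by linarith⟩
            ⟨by linarith, by linarith⟩ (by linarith)
      have him : z.im = Real.sin (Complex.arg z) * ‖z‖ := by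
        have := Complex.sin_arg z
        field_simp at this
        linarith [this]
      nlinarith [hsinarg, hzabs]
    -- Schwarz–Pick
    have hSP := jc_schwarz_pick ψ hψd hstrict z w hz hw
    set X : ℝ := ‖ψ z - a‖ with hX_def
    set Y : ℝ := ‖ψ z - (starRingEnd ℂ) a‖ with hY_def
    set P : ℝ := ‖z - w‖ with hP_def
    set Q : ℝ := ‖z - (starRingEnd ℂ) w‖ with hQ_def
    have hXnn : 0 ≤ X := norm_nonneg _
    have hPnn : 0 ≤ P := norm_nonneg _
    have hQpos : 0 < Q := jc_denom_pos z w hz hw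
    have hPQ : P < Q := jc_abs_lt z w hz hw
    have hYle : Y ≤ X + 2 * a.im := by
      have h1 : ψ z - (starRingEnd ℂ) a = (ψ z - a) + (a - (starRingEnd ℂ) a) := by ring
      have h2 : ‖a - (starRingEnd ℂ) a‖ = 2 * a.im := by
        rw [Complex.sub_conj]
        simp only [norm_mul, Complex.norm_real, Complex.norm_I, mul_one, Real.norm_eq_abs]
        rw [abs_two, abs_of_pos haim]
      calc Y = ‖(ψ z - a) + (a - (starRingEnd ℂ) a)‖ := by rw [hY_def, ← h1]
        _ ≤ ‖ψ z - a‖ + ‖a - (starRingEnd ℂ) a‖ := norm_add_le _ _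
        _ = X + 2 * a.im := by rw [← hX_def, h2]
    have hQP2 : Q ^ 2 - P ^ 2 = 4 * z.im * w.im := by
      rw [hQ_def, hP_def, Complex.sq_norm, Complex.sq_norm]
      simp only [Complex.normSq_apply, Complex.sub_re, Complex.sub_im, Complex.conj_re,
        Complex.conj_im]
      ring
    -- X * (z.im * w.im) ≤ a.im * Q ^ 2
    have h5 : X * (Q - P) ≤ 2 * a.im * P := by nlinarith [hSP, hYle, hPnn]
    have h6 : X * (z.im * w.im) ≤ a.im * Q ^ 2 := by
      have m1 : X * (Q ^ 2 - P ^ 2) ≤ 2 * a.im * P * (Q + P) := by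
        nlinarith [mul_le_mul_of_nonneg_right h5 (by linarith : (0:ℝ) ≤ Q + P)]
      rw [hQP2] at m1
      have m3 : 2 * a.im * P * (Q + P) ≤ 4 * a.im * Q ^ 2 := by
        nlinarith [mul_nonneg (mul_nonneg haim.le (sub_nonneg.mpr hPQ.le))
          (by linarith : (0:ℝ) ≤ 2 * Q + P)]
      linarith
    have hQle : Q ≤ 2 * ‖z‖ := by
      have h1 : ‖z - (starRingEnd ℂ) w‖ ≤
          ‖z‖ + ‖(starRingEnd ℂ) w‖ := by
        simpa [sub_eq_add_neg] using norm_add_le z (-(starRingEnd ℂ) w)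
      rw [Complex.norm_conj] at h1
      rw [hQ_def]; linarith
    have hQ2 : Q ^ 2 ≤ 4 * ‖z‖ ^ 2 := by nlinarith [hQpos.le, hQle]
    -- conclude X ≤ (ε / 4) * |z|
    have hX4 : X * (Real.sin δ * ‖z‖) ≤ (ε / 4) * ‖z‖ * (Real.sin δ * ‖z‖) := by
      have step : X * (Real.sin δ * ‖z‖) * w.im ≤
          (ε / 4) * ‖z‖ * (Real.sin δ * ‖z‖) * w.im := by
        have e1 : X * (Real.sin δ * ‖z‖) * w.im ≤ X * z.im * w.im := by
          have := mul_le_mul_of_nonneg_right (mul_le_mul_of_nonneg_left hsector hXnn) hw.le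
          nlinarith [this]
        have e2 : X * z.im * w.im ≤ a.im * Q ^ 2 := by nlinarith [h6]
        have e3 : a.im * Q ^ 2 ≤ (η * w.im) * (4 * ‖z‖ ^ 2) := by
          have f1 := mul_le_mul_of_nonneg_right haim2.le (sq_nonneg Q)
          have f2 := mul_le_mul_of_nonneg_left hQ2 (mul_pos hηpos hw).le
          linarith
        have e4 : (η * w.im) * (4 * ‖z‖ ^ 2) =
            (ε / 4) * ‖z‖ * (Real.sin δ * ‖z‖) * w.im := by
          rw [hη_def]; ring
        linarith
      exact le_of_mul_le_mul_right step hw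
    have hXle : X ≤ (ε / 4) * ‖z‖ :=
      le_of_mul_le_mul_right hX4 (by positivity)
    -- final assembly
    have htri : ‖ψ z‖ ≤ ‖a‖ + X := by
      have : ψ z = a + (ψ z - a) := by ring
      calc ‖ψ z‖ = ‖a + (ψ z - a)‖ := by rw [← this]
        _ ≤ ‖a‖ + ‖ψ z - a‖ := norm_add_le _ _
        _ = ‖a‖ + X := by rw [← hX_def]
    rw [hkey z hz0, norm_div, div_lt_iff₀ hzabs]
    nlinarith [htri, hXle, hRa]
  · -- degenerate case : ψ is constant
    push_neg at hstrict
    obtain ⟨z₀, hz₀, hz₀im⟩ := hstrict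
    have hz₀im' : (ψ z₀).im = 0 := by
      have := hlow z₀ hz₀
      rw [hψim]; rw [hψim] at hz₀im; linarith
    have hopenH : IsOpen {z : ℂ | 0 < z.im} := isOpen_lt continuous_const Complex.continuous_im
    have hpc : IsPreconnected {z : ℂ | 0 < z.im} :=
      (convex_halfSpace_im_gt 0).isPreconnected
    have hψa : AnalyticOnNhd ℂ ψ {z : ℂ | 0 < z.im} := hψd.analyticOnNhd hopenH
    rcases hψa.is_constant_or_isOpen hpc with ⟨c, hc⟩ | hopen
    · -- ψ constant equal to c
      refine ⟨‖c‖ / ε, ?_⟩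
      intro z hz _ hR
      have hzabs : 0 < ‖z‖ :=
        lt_of_le_of_lt (by positivity) hR
      have hz0 : z ≠ 0 := by intro h; rw [h] at hzabs; simp at hzabs
      rw [hkey z hz0, hc z hz, norm_div, div_lt_iff₀ hzabs]
      rw [div_lt_iff₀ hε] at hR
      nlinarith
    · -- ψ open map : contradiction
      exfalso
      have himg : IsOpen (ψ '' {z : ℂ | 0 < z.im}) :=
        hopen _ le_rfl hopenH
      have hmem : ψ z₀ ∈ ψ '' {z : ℂ | 0 < z.im} := ⟨z₀, hz₀, rfl⟩
      obtain ⟨ρ, hρ, hball⟩ := Metric.isOpen_iff.mp himg _ hmem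
      have hpt : ψ z₀ - (ρ / 2 : ℝ) * Complex.I ∈ Metric.ball (ψ z₀) ρ := by
        rw [Metric.mem_ball, dist_eq_norm]
        have : ψ z₀ - (ρ / 2 : ℝ) * Complex.I - ψ z₀ = -((ρ / 2 : ℝ) * Complex.I) := by ring
        rw [this]
        simp only [norm_neg, norm_mul, Complex.norm_real, Complex.norm_I, mul_one,
          Real.norm_eq_abs]
        rw [abs_of_pos (by linarith)]
        linarith
      obtain ⟨z₁, hz₁, hz₁eq⟩ := hball hpt
      have him1 : (ψ z₁).im = -(ρ / 2) := by
        rw [hz₁eq]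
        simp [Complex.sub_im, Complex.mul_im, hz₀im']
      have := hlow z₁ hz₁
      rw [hψim] at him1
      linarith
end

section
/- Let Φ be an analytic self-map of the upper half-plane ℍ with inf_{z∈ℍ} Im Φ(z)/Im z = A > 1 (hyperbolic type with Denjoy–Wolff point ∞). Then every orbit zₙ = Φⁿ(z₀) stays in a fixed non-tangential approach region: there exists δ > 0, depending only on z₀, such that |Arg zₙ − π/2| < π/2 − δ for all n. -/
/-!
By the Schwarz–Pick lemma, the pseudo-hyperbolic distance between consecutive orbit points
`zₙ, zₙ₊₁` is at most `ρ = ρ(z₀, z₁) < 1`, which forces `|zₙ₊₁ - zₙ| ≤ 2ρ/(1-ρ) · Im zₙ`.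
As `Im zₙ₊₁ ≥ A · Im zₙ`, the imaginary parts grow geometrically, so `∑_{k<n} Im z_k` is at most
`Im zₙ / (A - 1)`. Summing the increments gives `|Re zₙ - Re z₀| ≤ C · Im zₙ`, and since `Im zₙ`
is nondecreasing the whole orbit lies in a cone `|Re z| ≤ M · Im z` around the imaginary axis.
-/

open Complex Real Set Metric ComplexConjugate

local notation "ℍₒ" => UpperHalfPlane.upperHalfPlaneSet

lemma Complex.sub_conj_ne_zero_of_im_pos {z w : ℂ} (hz : 0 < z.im) (hw : 0 < w.im) :
    z - conj w ≠ 0 := by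
  intro h
  have := congrArg Complex.im h
  simp only [sub_im, conj_im, zero_im] at this
  linarith

lemma Complex.norm_sub_lt_norm_sub_conj {z w : ℂ} (hz : 0 < z.im) (hw : 0 < w.im) :
    ‖z - w‖ < ‖z - conj w‖ := by
  rw [← sq_lt_sq₀ (norm_nonneg _) (norm_nonneg _), Complex.sq_norm, Complex.sq_norm]
  simp only [normSq_apply, sub_re, sub_im, conj_re, conj_im]
  nlinarith [mul_pos hz hw]

/-- The Möbius map of `ℍ` onto the unit disc sending `w` to `0`; `‖halfPlaneToDisc w z‖` is the
pseudo-hyperbolic distance between `z` and `w`. -/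
noncomputable def halfPlaneToDisc (w z : ℂ) : ℂ := (z - w) / (z - conj w)

noncomputable def discToHalfPlane (w ζ : ℂ) : ℂ := (w - conj w * ζ) / (1 - ζ)

@[simp]
lemma halfPlaneToDisc_self (w : ℂ) : halfPlaneToDisc w w = 0 := by
  simp [halfPlaneToDisc]

@[simp]
lemma discToHalfPlane_zero (w : ℂ) : discToHalfPlane w 0 = w := by
  simp [discToHalfPlane]

lemma norm_halfPlaneToDisc_lt_one {z w : ℂ} (hz : 0 < z.im) (hw : 0 < w.im) :
    ‖halfPlaneToDisc w z‖ < 1 := by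
  rw [halfPlaneToDisc, norm_div, div_lt_one (norm_pos_iff.2 (sub_conj_ne_zero_of_im_pos hz hw))]
  exact norm_sub_lt_norm_sub_conj hz hw

lemma discToHalfPlane_halfPlaneToDisc {z w : ℂ} (hz : 0 < z.im) (hw : 0 < w.im) :
    discToHalfPlane w (halfPlaneToDisc w z) = z := by
  have hzw := sub_conj_ne_zero_of_im_pos hz hw
  have hww := sub_conj_ne_zero_of_im_pos hw hw
  rw [discToHalfPlane, halfPlaneToDisc, div_eq_iff]
  · field_simp
    ring
  · rw [one_sub_div hzw]
    exact div_ne_zero (by simpa using hww) hzw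

lemma im_discToHalfPlane_pos {w ζ : ℂ} (hw : 0 < w.im) (hζ : ‖ζ‖ < 1) :
    0 < (discToHalfPlane w ζ).im := by
  have hζ1 : ζ ≠ 1 := by rintro rfl; simp at hζ
  have hnormSq : normSq ζ < 1 := by
    rw [← Complex.sq_norm]; nlinarith [norm_nonneg ζ]
  rw [discToHalfPlane, div_im, div_sub_div_same]
  refine div_pos ?_ (normSq_pos.2 (sub_ne_zero.2 hζ1.symm))
  simp only [normSq_apply] at hnormSq
  simp only [sub_im, sub_re, mul_im, mul_re, conj_re, conj_im, one_re, one_im]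
  nlinarith

lemma mapsTo_discToHalfPlane {w : ℂ} (hw : 0 < w.im) :
    MapsTo (discToHalfPlane w) (ball 0 1) ℍₒ :=
  fun _ hζ => im_discToHalfPlane_pos hw (mem_ball_zero_iff.1 hζ)

lemma differentiableOn_discToHalfPlane (w : ℂ) :
    DifferentiableOn ℂ (discToHalfPlane w) (ball 0 1) := by
  refine ((differentiable_const w).sub (differentiable_id.const_mul _)).differentiableOn.div
    (differentiable_id.const_sub 1).differentiableOn fun ζ hζ h => ?_
  rw [sub_eq_zero] at h
  simp [← h] at hζ

lemma differentiableOn_halfPlaneToDisc {w : ℂ} (hw : 0 < w.im) :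
    DifferentiableOn ℂ (halfPlaneToDisc w) ℍₒ :=
  (differentiable_id.sub_const w).differentiableOn.div
    (differentiable_id.sub_const _).differentiableOn fun _ hz => sub_conj_ne_zero_of_im_pos hz hw

/-- Schwarz–Pick lemma for the upper half-plane. -/
theorem norm_halfPlaneToDisc_le_of_mapsTo {f : ℂ → ℂ} (hd : DifferentiableOn ℂ f ℍₒ)
    (hm : MapsTo f ℍₒ ℍₒ) {z w : ℂ} (hz : 0 < z.im) (hw : 0 < w.im) :
    ‖halfPlaneToDisc (f w) (f z)‖ ≤ ‖halfPlaneToDisc w z‖ := by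
  set g := halfPlaneToDisc (f w) ∘ f ∘ discToHalfPlane w
  have hT := mapsTo_discToHalfPlane hw
  have hgd : DifferentiableOn ℂ g (ball 0 1) :=
    (differentiableOn_halfPlaneToDisc (hm hw)).comp
      (hd.comp (differentiableOn_discToHalfPlane w) hT) (hm.comp hT)
  have hgm : MapsTo g (ball 0 1) (closedBall 0 1) := fun ζ hζ => by
    simpa [g] using (norm_halfPlaneToDisc_lt_one (hm (hT hζ)) (hm hw)).le
  have hg0 : g 0 = 0 := by simp [g]
  simpa [g, discToHalfPlane_halfPlaneToDisc hz hw] using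
    Complex.norm_le_norm_of_mapsTo_ball hgd hgm hg0 (norm_halfPlaneToDisc_lt_one hz hw)

lemma norm_sub_le_of_norm_halfPlaneToDisc_le {z w : ℂ} (hz : 0 < z.im) (hw : 0 < w.im) {ρ : ℝ}
    (hρ : ρ < 1) (h : ‖halfPlaneToDisc w z‖ ≤ ρ) : ‖z - w‖ ≤ 2 * ρ / (1 - ρ) * w.im := by
  have hρ0 : 0 ≤ ρ := (norm_nonneg _).trans h
  have hden := norm_pos_iff.2 (sub_conj_ne_zero_of_im_pos hz hw)
  rw [halfPlaneToDisc, norm_div, div_le_iff₀ hden] at h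
  have hconj : ‖z - conj w‖ ≤ ‖z - w‖ + 2 * w.im := by
    calc ‖z - conj w‖ = ‖(z - w) + (w - conj w)‖ := by ring_nf
      _ ≤ ‖z - w‖ + ‖w - conj w‖ := norm_add_le _ _
      _ = ‖z - w‖ + 2 * w.im := by
        rw [sub_conj, norm_mul, norm_I, mul_one, norm_real, norm_of_nonneg (by linarith)]
  rw [div_mul_eq_mul_div, le_div_iff₀ (by linarith)]
  nlinarith

lemma norm_iterate_succ_sub_iterate_le {f : ℂ → ℂ} (hd : DifferentiableOn ℂ f ℍₒ)
    (hm : MapsTo f ℍₒ ℍₒ) {z : ℂ} (hz : 0 < z.im) {ρ : ℝ}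
    (hρ : ‖halfPlaneToDisc z (f z)‖ ≤ ρ) (hρ1 : ρ < 1) (n : ℕ) :
    ‖f^[n + 1] z - f^[n] z‖ ≤ 2 * ρ / (1 - ρ) * (f^[n] z).im := by
  have hfz : 0 < (f z).im := hm hz
  refine norm_sub_le_of_norm_halfPlaneToDisc_le (hm.iterate (n + 1) hz) (hm.iterate n hz) hρ1 ?_
  rw [Function.iterate_succ_apply]
  exact (norm_halfPlaneToDisc_le_of_mapsTo (hd.iterate hm n) (hm.iterate n) hfz hz).trans hρ

lemma sub_one_mul_sum_range_le {y : ℕ → ℝ} {A : ℝ} (h0 : 0 ≤ y 0)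
    (hy : ∀ n, A * y n ≤ y (n + 1)) (n : ℕ) : (A - 1) * ∑ k ∈ Finset.range n, y k ≤ y n := by
  induction n with
  | zero => simpa using h0
  | succ n ih =>
    rw [Finset.sum_range_succ]
    linarith [hy n]

lemma norm_sub_le_of_norm_sub_succ_le {E : Type*} [SeminormedAddCommGroup E] {x : ℕ → E}
    {y : ℕ → ℝ} {A C : ℝ} (hA : 1 < A) (hC : 0 ≤ C) (h0 : 0 ≤ y 0)
    (hy : ∀ n, A * y n ≤ y (n + 1)) (hx : ∀ n, ‖x (n + 1) - x n‖ ≤ C * y n) (n : ℕ) :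
    ‖x n - x 0‖ ≤ C / (A - 1) * y n := by
  have hsum := sub_one_mul_sum_range_le h0 hy n
  calc ‖x n - x 0‖ = ‖∑ k ∈ Finset.range n, (x (k + 1) - x k)‖ := by rw [Finset.sum_range_sub]
    _ ≤ ∑ k ∈ Finset.range n, C * y k := norm_sum_le_of_le _ fun k _ => hx k
    _ = C / (A - 1) * ((A - 1) * ∑ k ∈ Finset.range n, y k) := by
      rw [← Finset.mul_sum]; field_simp [(by linarith : A - 1 ≠ 0)]
    _ ≤ C / (A - 1) * y n := by gcongr

lemma abs_re_le_of_norm_sub_le {z z₀ : ℂ} (hz₀ : 0 < z₀.im) (him : z₀.im ≤ z.im) {K : ℝ}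
    (h : ‖z - z₀‖ ≤ K * z.im) : |z.re| ≤ (|z₀.re| / z₀.im + K) * z.im := by
  have hre : |z.re - z₀.re| ≤ K * z.im := by simpa using (abs_re_le_norm (z - z₀)).trans h
  have h₀ : |z₀.re| ≤ |z₀.re| / z₀.im * z.im := by
    rw [div_mul_eq_mul_div, le_div_iff₀ hz₀]
    exact mul_le_mul_of_nonneg_left him (abs_nonneg _)
  linarith [abs_sub_abs_le_abs_sub z.re z₀.re]

lemma abs_arg_sub_pi_div_two_le {z : ℂ} (hz : 0 < z.im) {M : ℝ} (h : |z.re| ≤ M * z.im) :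
    |arg z - π / 2| ≤ Real.arctan M := by
  have hM : 0 ≤ M := nonneg_of_mul_nonneg_left ((abs_nonneg _).trans h) hz
  have hnorm : 0 < ‖z‖ := norm_pos_iff.2 fun h0 => by simp [h0] at hz
  have hsin : |z.re / ‖z‖| ≤ M / √(1 + M ^ 2) := by
    refine abs_le_of_sq_le_sq ?_ (by positivity)
    rw [div_pow, div_pow, sq_sqrt (by positivity), Complex.sq_norm, normSq_apply,
      div_le_div_iff₀ (by nlinarith) (by positivity)]
    nlinarith [sq_abs z.re, abs_nonneg z.re]
  rw [arg_of_im_pos hz, arccos_eq_pi_div_two_sub_arcsin, arctan_eq_arcsin,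
    show π / 2 - arcsin (z.re / ‖z‖) - π / 2 = -arcsin (z.re / ‖z‖) by ring, abs_neg]
  obtain ⟨hl, hr⟩ := abs_le.1 hsin
  exact abs_le.2 ⟨arcsin_neg _ ▸ monotone_arcsin hl, monotone_arcsin hr⟩

theorem orbits_nontangential (Φ : ℂ → ℂ)
    (hd : DifferentiableOn ℂ Φ {z : ℂ | 0 < z.im})
    (hm : Set.MapsTo Φ {z : ℂ | 0 < z.im} {z : ℂ | 0 < z.im})
    (A : ℝ) (hA1 : 1 < A)
    (hA : IsGLB {r : ℝ | ∃ z : ℂ, 0 < z.im ∧ r = (Φ z).im / z.im} A) :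
    ∀ z₀ : ℂ, 0 < z₀.im → ∃ δ : ℝ, 0 < δ ∧
      ∀ n : ℕ, |Complex.arg (Φ^[n] z₀) - π / 2| < π / 2 - δ := by
  intro z₀ hz₀
  have hpos (n : ℕ) : 0 < (Φ^[n] z₀).im := hm.iterate n hz₀
  have hgrowth (n : ℕ) : A * (Φ^[n] z₀).im ≤ (Φ^[n + 1] z₀).im := by
    rw [Function.iterate_succ_apply', ← le_div_iff₀ (hpos n)]
    exact hA.1 ⟨_, hpos n, rfl⟩
  have hmono : Monotone fun n => (Φ^[n] z₀).im :=
    monotone_nat_of_le_succ fun n => by nlinarith [hgrowth n, hpos n]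
  set ρ := ‖halfPlaneToDisc z₀ (Φ z₀)‖
  have hρ : ρ < 1 := norm_halfPlaneToDisc_lt_one (hm hz₀) hz₀
  have hdrift (n : ℕ) : ‖Φ^[n] z₀ - z₀‖ ≤ 2 * ρ / (1 - ρ) / (A - 1) * (Φ^[n] z₀).im :=
    norm_sub_le_of_norm_sub_succ_le (x := fun k => Φ^[k] z₀) hA1
      (div_nonneg (mul_nonneg zero_le_two (norm_nonneg _)) (by linarith)) (hpos 0).le hgrowth
      (norm_iterate_succ_sub_iterate_le hd hm hz₀ le_rfl hρ) n
  set M := |z₀.re| / z₀.im + 2 * ρ / (1 - ρ) / (A - 1)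
  refine ⟨(π / 2 - Real.arctan M) / 2, by linarith [arctan_lt_pi_div_two M], fun n => ?_⟩
  have harg := abs_arg_sub_pi_div_two_le (hpos n)
    (abs_re_le_of_norm_sub_le hz₀ (hmono (Nat.zero_le n)) (hdrift n))
  linarith [arctan_lt_pi_div_two M]
end
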